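/- arXiv:1712.03006 — 3 statements merged into one kernel-verified Lean document; each statement's English description precedes it below -/
import Mathlib

section
/- Let q ∈ ℂ× with q ≠ ±1 and fix i ∈ {1,…,n}. If D is a twisted derivation of the polynomial ring ℂ[x₁,…,xₙ] relative to the automorphism γ_{q,x_i}, then D equals the composition of the q-derivative ∂_{q,x_i} followed by multiplication by the polynomial f_i = D(x_i); in particular D(x_j) = 0 for all j ≠ i. -/
open MvPolynomial

/-- The `q`-integer `[m]_q = (q^m − q^{−m})/(q − q^{−1})`. -/
noncomputable def qNum (q : ℂ) (m : ℕ) : ℂ := (q ^ m - q⁻¹ ^ m) / (q - q⁻¹)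

/-- The operator `∂_{q,x_u}` on `ℂ[x_1,…,x_n]`, acting on a monomial `x^α` by
`[α_u]_q · x^{α − e_u}` (zero if `α_u = 0`). -/
noncomputable def delOp {σ : Type*} [DecidableEq σ] (q : ℂ) (u : σ) :
    Module.End ℂ (MvPolynomial σ ℂ) :=
  (basisMonomials σ ℂ).constr ℂ fun m => qNum q (m u) • monomial (m - Finsupp.single u 1) 1

/-!
A twisted derivation of `ℂ[x₁,…,xₙ]` satisfies `D(p xⱼ) = D(p) γ(xⱼ) + γ⁻¹(p) D(xⱼ)`, so it is
determined by `D(1) = 0` and the values `D(xⱼ)`. Comparing `D(xᵢxⱼ)` with `D(xⱼxᵢ)` gives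
`(q − q⁻¹) xᵢ D(xⱼ) = 0` for `j ≠ i`. On the other hand `f ↦ D(xᵢ) ∂_{q,xᵢ} f` obeys the same rule,
because `[m + 1]_q = q [m]_q + q^{−m}`, and takes the same values on `1` and on the variables.
-/

def IsTwistedDerivation {R A : Type*} [CommSemiring R] [Semiring A] [Algebra R A]
    (γ : A ≃ₐ[R] A) (D : A →ₗ[R] A) : Prop :=
  ∀ a b, D (a * b) = D a * γ b + γ.symm a * D b

theorem IsTwistedDerivation.map_one {R A : Type*} [CommSemiring R] [Ring A] [Algebra R A]
    {γ : A ≃ₐ[R] A} {D : A →ₗ[R] A} (hD : IsTwistedDerivation γ D) : D 1 = 0 := by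
  simpa using hD 1 1

theorem IsTwistedDerivation.map_eq_zero_of_apply_eq_smul {K A : Type*} [Field K] [CommRing A]
    [IsDomain A] [Algebra K A] {γ : A ≃ₐ[K] A} {D : A →ₗ[K] A} (hD : IsTwistedDerivation γ D)
    {a b : A} {c : K} (hc : c - c⁻¹ ≠ 0) (ha : a ≠ 0) (hγa : γ a = c • a) (hγb : γ b = b) :
    D b = 0 := by
  have hc0 : c ≠ 0 := by rintro rfl; simp at hc
  have hγa' : γ.symm a = c⁻¹ • a := by
    rw [AlgEquiv.symm_apply_eq, map_smul, hγa, smul_smul, inv_mul_cancel₀ hc0, one_smul]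
  have hγb' : γ.symm b = b := by rw [AlgEquiv.symm_apply_eq, hγb]
  have h := (hD a b).symm.trans (mul_comm a b ▸ hD b a)
  rw [hγa, hγb, hγa', hγb'] at h
  simp only [Algebra.smul_def] at h
  have hz : algebraMap K A (c - c⁻¹) * (a * D b) = 0 := by
    rw [map_sub]
    linear_combination -h
  have hDb : a * D b = 0 := (mul_eq_zero.mp hz).resolve_left ((map_ne_zero _).mpr hc)
  exact (mul_eq_zero.mp hDb).resolve_left ha

section scaleVar

variable {R σ : Type*} [CommSemiring R] [DecidableEq σ]

noncomputable def scaleVar (c : R) (i : σ) : MvPolynomial σ R →ₐ[R] MvPolynomial σ R :=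
  aeval fun j => if j = i then c • X j else X j

theorem scaleVar_X (c : R) (i j : σ) :
    scaleVar c i (X j) = if j = i then c • X j else X j :=
  aeval_X _ _

theorem scaleVar_monomial (c : R) (i : σ) (m : σ →₀ ℕ) (a : R) :
    scaleVar c i (monomial m a) = c ^ m i • monomial m a := by
  induction m using Finsupp.induction with
  | zero => simp [monomial_zero', algHom_C]
  | single_add j k m hjm hk ih =>
    rw [monomial_single_add, map_mul, map_pow, scaleVar_X, ih]
    split_ifs with hji
    · subst hji
      simp [Finsupp.notMem_support_iff.mp hjm, smul_pow]
    · simp [hji]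

theorem eq_scaleVar_of_apply_X {φ : MvPolynomial σ R →ₐ[R] MvPolynomial σ R} {c : R} {i : σ}
    (hφ : ∀ j, φ (X j) = if j = i then c • X j else X j) : φ = scaleVar c i :=
  algHom_ext fun j => (hφ j).trans (scaleVar_X c i j).symm

end scaleVar

theorem AlgEquiv.symm_eq_scaleVar {K σ : Type*} [Field K] [DecidableEq σ]
    {γ : MvPolynomial σ K ≃ₐ[K] MvPolynomial σ K} {c : K} {i : σ} (hc : c ≠ 0)
    (hγ : ∀ j, γ (X j) = if j = i then c • X j else X j) :
    (γ.symm : MvPolynomial σ K →ₐ[K] MvPolynomial σ K) = scaleVar c⁻¹ i := by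
  refine eq_scaleVar_of_apply_X fun j => ?_
  rw [AlgEquiv.coe_toAlgHom, AlgEquiv.symm_apply_eq]
  split_ifs with hj
  · rw [map_smul, hγ, if_pos hj, smul_smul, inv_mul_cancel₀ hc, one_smul]
  · rw [hγ, if_neg hj]

theorem linearMap_ext_of_map_mul_X {R σ : Type*} [CommSemiring R]
    {D D' : MvPolynomial σ R →ₗ[R] MvPolynomial σ R}
    {φ ψ : MvPolynomial σ R → MvPolynomial σ R}
    (hD : ∀ p j, D (p * X j) = D p * φ (X j) + ψ p * D (X j))
    (hD' : ∀ p j, D' (p * X j) = D' p * φ (X j) + ψ p * D' (X j))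
    (h1 : D 1 = D' 1) (hX : ∀ j, D (X j) = D' (X j)) : D = D' := by
  refine LinearMap.ext fun p => ?_
  induction p using MvPolynomial.induction_on with
  | C a => rw [C_eq_smul_one, map_smul, map_smul, h1]
  | add p p' hp hp' => rw [map_add, map_add, hp, hp']
  | mul_X p j hp => rw [hD, hD', hp, hX]

theorem sub_inv_ne_zero_of_ne {K : Type*} [Field K] {c : K} (h0 : c ≠ 0) (h1 : c ≠ 1)
    (hm1 : c ≠ -1) : c - c⁻¹ ≠ 0 := by
  rw [sub_ne_zero]
  intro h
  have hsq : c * c = 1 := by nth_rewrite 2 [h]; exact mul_inv_cancel₀ h0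
  exact (mul_self_eq_one_iff.mp hsq).elim h1 hm1

theorem qNum_zero (q : ℂ) : qNum q 0 = 0 := by simp [qNum]

section qNum

variable {q : ℂ}

theorem qNum_one (hq : q - q⁻¹ ≠ 0) : qNum q 1 = 1 := by
  simp [qNum, div_self hq]

theorem qNum_succ (hq : q - q⁻¹ ≠ 0) (m : ℕ) :
    qNum q (m + 1) = q * qNum q m + q⁻¹ ^ m := by
  rw [qNum, qNum, mul_div_assoc', div_add' _ _ _ hq]
  ring

end qNum

section delOp

variable {σ : Type*} [DecidableEq σ] {q : ℂ} {u : σ}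

theorem delOp_monomial (m : σ →₀ ℕ) (a : ℂ) :
    delOp q u (monomial m a) = monomial (m - Finsupp.single u 1) (qNum q (m u) * a) := by
  have hbasis : monomial m a = a • basisMonomials σ ℂ m := by
    rw [coe_basisMonomials, smul_monomial, smul_eq_mul, mul_one]
  rw [hbasis, map_smul, delOp, Module.Basis.constr_basis, smul_smul, smul_monomial, smul_eq_mul,
    mul_one, mul_comm]

theorem delOp_C (a : ℂ) : delOp q u (C a) = 0 := by
  rw [← monomial_zero', delOp_monomial, Finsupp.coe_zero, Pi.zero_apply, qNum_zero, zero_mul,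
    monomial_zero]

theorem delOp_X (hq : q - q⁻¹ ≠ 0) (j : σ) : delOp q u (X j) = if j = u then 1 else 0 := by
  rw [X, delOp_monomial, Finsupp.single_apply]
  split_ifs with h
  · rw [h, tsub_self, qNum_one hq, mul_one, monomial_zero', C_1]
  · rw [qNum_zero, zero_mul, monomial_zero]

theorem X_mul_delOp_monomial (m : σ →₀ ℕ) (a : ℂ) :
    X u * delOp q u (monomial m a) = monomial m (qNum q (m u) * a) := by
  rw [delOp_monomial]
  obtain h | h := eq_or_ne (m u) 0
  · rw [h, qNum_zero, zero_mul, monomial_zero, monomial_zero, mul_zero]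
  · have hle : Finsupp.single u 1 ≤ m := Finsupp.single_le_iff.mpr (Nat.one_le_iff_ne_zero.mpr h)
    rw [mul_comm, ← pow_one (X u), ← monomial_add_single, tsub_add_cancel_of_le hle]

theorem delOp_mul_X_of_ne {j : σ} (hj : j ≠ u) (p : MvPolynomial σ ℂ) :
    delOp q u (p * X j) = delOp q u p * X j := by
  induction p using MvPolynomial.induction_on' with
  | monomial m a =>
    have hexp : m + Finsupp.single j 1 - Finsupp.single u 1
        = m - Finsupp.single u 1 + Finsupp.single j 1 := by
      ext k
      rcases eq_or_ne k u with rfl | hk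
      · simp [Finsupp.single_eq_of_ne hj.symm]
      · simp [Finsupp.single_eq_of_ne hk]
    rw [← pow_one (X j), ← monomial_add_single, delOp_monomial, delOp_monomial, hexp,
      monomial_add_single, Finsupp.add_apply, Finsupp.single_eq_of_ne hj.symm, add_zero]
  | add p p' hp hp' => rw [add_mul, map_add, map_add, hp, hp', add_mul]

theorem delOp_mul_X_self (hq : q - q⁻¹ ≠ 0) (p : MvPolynomial σ ℂ) :
    delOp q u (p * X u) = q • (X u * delOp q u p) + scaleVar q⁻¹ u p := by
  induction p using MvPolynomial.induction_on' with
  | monomial m a =>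
    rw [← pow_one (X u), ← monomial_add_single, delOp_monomial, pow_one, X_mul_delOp_monomial,
      scaleVar_monomial, add_tsub_cancel_right, Finsupp.add_apply, Finsupp.single_eq_same,
      qNum_succ hq, smul_monomial, smul_monomial, ← map_add]
    congr 1
    simp only [smul_eq_mul]
    ring
  | add p p' hp hp' =>
    rw [add_mul, map_add, map_add, hp, hp', mul_add, smul_add, map_add]
    abel

theorem delOp_mul_X (hq : q - q⁻¹ ≠ 0) (p : MvPolynomial σ ℂ) (j : σ) :
    delOp q u (p * X j) =
      delOp q u p * scaleVar q u (X j) + scaleVar q⁻¹ u p * delOp q u (X j) := by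
  rw [scaleVar_X, delOp_X hq]
  split_ifs with h
  · subst h
    rw [delOp_mul_X_self hq, mul_one, mul_smul_comm, mul_comm]
  · rw [delOp_mul_X_of_ne h, mul_zero, add_zero]

end delOp

/-- every twisted derivation of `ℂ[x_1,…,x_n]` relative to `γ_{q,x_i}` equals
the `q`-derivative `∂_{q,x_i}` followed by multiplication by `f_i = D(x_i)`; in particular
`D(x_j) = 0` for `j ≠ i`. Here `γ_{q,x_i}` is the algebra automorphism determined by
`x_i ↦ q·x_i`, `x_j ↦ x_j` for `j ≠ i`. -/
theorem twisted_derivation_polynomial_eq_qDerivative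
    (n : ℕ) (q : ℂ) (hq0 : q ≠ 0) (hq1 : q ≠ 1) (hqm1 : q ≠ -1) (i : Fin n)
    (γ : MvPolynomial (Fin n) ℂ ≃ₐ[ℂ] MvPolynomial (Fin n) ℂ)
    (hγ : ∀ j : Fin n, γ (X j) = if j = i then q • X j else X j)
    (D : MvPolynomial (Fin n) ℂ →ₗ[ℂ] MvPolynomial (Fin n) ℂ)
    (hD : ∀ a b : MvPolynomial (Fin n) ℂ, D (a * b) = D a * γ b + γ.symm a * D b) :
    (∀ j : Fin n, j ≠ i → D (X j) = 0) ∧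
      ∀ f : MvPolynomial (Fin n) ℂ, D f = D (X i) * delOp q i f := by
  have hq : q - q⁻¹ ≠ 0 := sub_inv_ne_zero_of_ne hq0 hq1 hqm1
  have hγ_eq (p) : γ p = scaleVar q i p :=
    AlgHom.congr_fun (eq_scaleVar_of_apply_X (φ := γ.toAlgHom) hγ) p
  have hγ_symm_eq (p) : γ.symm p = scaleVar q⁻¹ i p :=
    AlgHom.congr_fun (AlgEquiv.symm_eq_scaleVar hq0 hγ) p
  have hDX_ne (j) (hj : j ≠ i) : D (X j) = 0 :=
    IsTwistedDerivation.map_eq_zero_of_apply_eq_smul hD hq (X_ne_zero i)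
      (by simpa using hγ i) (by simpa [hj] using hγ j)
  have hext : D = LinearMap.mulLeft ℂ (D (X i)) ∘ₗ delOp q i := by
    refine linearMap_ext_of_map_mul_X (fun p j => hD p (X j)) (fun p j => ?_) ?_ fun j => ?_
    · simp only [LinearMap.comp_apply, LinearMap.mulLeft_apply, delOp_mul_X hq, hγ_eq, hγ_symm_eq]
      ring
    · rw [LinearMap.comp_apply, ← C_1, delOp_C, LinearMap.mulLeft_apply, mul_zero, C_1,
        IsTwistedDerivation.map_one hD]
    · rw [LinearMap.comp_apply, LinearMap.mulLeft_apply, delOp_X hq]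
      split_ifs with hj
      · rw [hj, mul_one]
      · rw [hDX_ne j hj, mul_zero]
  exact ⟨hDX_ne, fun f => LinearMap.congr_fun hext f⟩
end

section
/- Let q ∈ ℂ× be not a root of unity and let ℂ_q[x,y,z] be the quotient of the free unital associative ℂ-algebra on x, y, z by the two-sided ideal generated by xz − q²zx, xy − yx + q(q² − q⁻²)z², yz − q⁻²zy. Then the center of ℂ_q[x,y,z] equals the unital subalgebra generated by the element p_q = q⁻¹xy + q²z²; i.e., Z(ℂ_q[x,y,z]) is exactly the set of polynomial expressions in p_q. -/
/-!
The monomials `z^a x^b y^c` form a basis of `ℂ_q[x,y,z]`. They span because multiplying a monomial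
on the left by a generator gives a combination of monomials, and they are linearly independent
because the same rewriting rules define a representation on `ℂ^(ℕ³)` that maps each monomial,
applied to `e₀₀₀`, to its own basis vector.

In these coordinates, commuting with `z` multiplies the `(a,b,c)`-coefficient by `q^(2(b-c))`, so
a central element is supported on `b = c`. Commuting with `x` then gives
`(q^(2a) - 1) · coeff (a,b,c) = (coefficients with smaller a)`. Hence a central element is
determined by its coefficients at `(0,b,b)`. Now `p_q` is central, and `p_qⁿ` has coefficient
`q⁻ⁿ` at `(0,n,n)` and `0` at every other `(0,b,b)`. So subtracting a polynomial in `p_q` takes any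
central element to zero.
-/

/-- Generators `x`, `y`, `z`. -/
inductive XYZ : Type
  | x : XYZ
  | y : XYZ
  | z : XYZ

namespace CqXYZ

noncomputable def x : FreeAlgebra ℂ XYZ := FreeAlgebra.ι ℂ XYZ.x
noncomputable def y : FreeAlgebra ℂ XYZ := FreeAlgebra.ι ℂ XYZ.y
noncomputable def z : FreeAlgebra ℂ XYZ := FreeAlgebra.ι ℂ XYZ.z

/-- The defining relations of `ℂ_q[x,y,z]`:
`xz = q²zx`, `xy = yx − q(q² − q⁻²)z²`, `yz = q⁻²zy`. -/
inductive rel (q : ℂ) : FreeAlgebra ℂ XYZ → FreeAlgebra ℂ XYZ → Prop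
  | xz : rel q (x * z) (q ^ 2 • (z * x))
  | xy : rel q (x * y) (y * x - (q * (q ^ 2 - q⁻¹ ^ 2)) • (z * z))
  | yz : rel q (y * z) (q⁻¹ ^ 2 • (z * y))

/-- `ℂ_q[x,y,z] = ℂ⟨x,y,z⟩/(xz − q²zx, xy − yx + q(q² − q⁻²)z², yz − q⁻²zy)`. -/
abbrev Cq (q : ℂ) := RingQuot (rel q)

noncomputable def X (q : ℂ) : Cq q := RingQuot.mkAlgHom ℂ (rel q) x
noncomputable def Y (q : ℂ) : Cq q := RingQuot.mkAlgHom ℂ (rel q) y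
noncomputable def Z (q : ℂ) : Cq q := RingQuot.mkAlgHom ℂ (rel q) z

/-- `p_q = q⁻¹xy + q²z²`. -/
noncomputable def pq (q : ℂ) : Cq q := q⁻¹ • (X q * Y q) + q ^ 2 • (Z q * Z q)

end CqXYZ

namespace Finsupp

variable {α R : Type*} [Semiring R]

noncomputable def weightedShift (d : α → α) (w : α → R) : (α →₀ R) →ₗ[R] α →₀ R :=
  linearCombination R fun p => single (d p) (w p)

@[simp]
theorem weightedShift_single (d : α → α) (w : α → R) (p : α) (r : R) :
    weightedShift d w (single p r) = single (d p) (r * w p) := by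
  rw [weightedShift, linearCombination_single, smul_single, smul_eq_mul]

theorem weightedShift_apply_of_eq {d : α → α} {w : α → R} (f : α →₀ R) {p P : α} (hP : d p = P)
    (h : ∀ p', d p' = P → p' ≠ p → w p' = 0) : weightedShift d w f P = f p * w p := by
  classical
  rw [weightedShift, linearCombination_apply, sum_apply, Finsupp.sum, Finset.sum_eq_single p]
  · simp [hP]
  · intro p' _ hne
    rw [smul_apply, single_apply]
    split_ifs with hp'
    · rw [h p' hp' hne, smul_zero]
    · rw [smul_zero]
  · simp +contextual

theorem weightedShift_apply_eq_zero {d : α → α} {w : α → R} (f : α →₀ R) {P : α}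
    (h : ∀ p, d p = P → f p * w p = 0) : weightedShift d w f P = 0 := by
  classical
  rw [weightedShift, linearCombination_apply, sum_apply, Finsupp.sum]
  refine Finset.sum_eq_zero fun p _ => ?_
  by_cases hp : d p = P <;> simp [hp, h p]

end Finsupp

section QCommute

variable {R A : Type*} [CommSemiring R] [Semiring A] [Algebra R A] {a b : A} {r : R}

theorem mul_pow_eq_smul_pow_mul (h : a * b = r • (b * a)) (n : ℕ) :
    a * b ^ n = r ^ n • (b ^ n * a) := by
  induction n with
  | zero => simp
  | succ n ih =>
    rw [pow_succ, ← mul_assoc, ih, smul_mul_assoc, mul_assoc, h, mul_smul_comm, smul_smul,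
      ← mul_assoc, ← pow_succ]

theorem pow_mul_eq_smul_mul_pow (h : a * b = r • (b * a)) (n : ℕ) :
    a ^ n * b = r ^ n • (b * a ^ n) := by
  induction n with
  | zero => simp
  | succ n ih =>
    rw [pow_succ, mul_assoc, h, mul_smul_comm, ← mul_assoc, ih, smul_mul_assoc, smul_smul,
      mul_assoc, ← pow_succ, ← pow_succ']

end QCommute

theorem Submodule.span_eq_top_of_mul_mem {R A : Type*} [CommSemiring R] [Semiring A]
    [Algebra R A] {s t : Set A} (hs : Algebra.adjoin R s = ⊤) (h1 : 1 ∈ span R t)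
    (hmul : ∀ g ∈ s, ∀ m ∈ t, g * m ∈ span R t) : span R t = ⊤ := by
  suffices ∀ a ∈ Algebra.adjoin R s, ∀ m ∈ span R t, a * m ∈ span R t from
    eq_top_iff'.2 fun a => by simpa using this a (hs ▸ Algebra.mem_top) 1 h1
  intro a ha
  induction ha using Algebra.adjoin_induction with
  | mem g hg =>
    exact fun m hm => (span_le (p := (span R t).comap (LinearMap.mulLeft R g))).2 (hmul g hg) hm
  | algebraMap r => intro m hm; simpa [Algebra.algebraMap_eq_smul_one] using smul_mem _ r hm
  | add a b _ _ ha hb => intro m hm; rw [add_mul]; exact add_mem (ha m hm) (hb m hm)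
  | mul a b _ _ ha hb => intro m hm; rw [mul_assoc]; exact ha _ (hb m hm)

theorem Module.Basis.repr_mul_eq_of_forall_basis_mul {ι R A : Type*} [CommSemiring R] [Semiring A]
    [Algebra R A] (b : Module.Basis ι R A) (a : A) {T : (ι →₀ R) →ₗ[R] ι →₀ R}
    (h : ∀ i, b.repr (b i * a) = T (Finsupp.single i 1)) (u : A) :
    b.repr (u * a) = T (b.repr u) :=
  LinearMap.congr_fun (b.ext (f₁ := b.repr.toLinearMap ∘ₗ LinearMap.mulRight R a)
    (f₂ := T ∘ₗ b.repr.toLinearMap) fun i => by simpa using h i) u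

theorem pow_injective_of_pow_ne_one {K : Type*} [GroupWithZero K] {q : K} (hq0 : q ≠ 0)
    (hq : ∀ k : ℕ, 0 < k → q ^ k ≠ 1) : Function.Injective (q ^ · : ℕ → K) := by
  have : orderOf (Units.mk0 q hq0) = 0 := by
    rw [← orderOf_units, Units.val_mk0, orderOf_eq_zero_iff']
    exact hq
  intro m n h
  exact (pow_inj_iff_of_orderOf_eq_zero this).1 (Units.ext (by simpa using h))

namespace CqXYZ

open Finsupp

section Relations

variable (q : ℂ)

theorem X_mul_Z : X q * Z q = q ^ 2 • (Z q * X q) := by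
  simpa only [X, Z, map_mul, map_smul] using RingQuot.mkAlgHom_rel ℂ (rel.xz (q := q))

theorem Y_mul_Z : Y q * Z q = q⁻¹ ^ 2 • (Z q * Y q) := by
  simpa only [Y, Z, map_mul, map_smul] using RingQuot.mkAlgHom_rel ℂ (rel.yz (q := q))

theorem Y_mul_X : Y q * X q = X q * Y q + (q * (q ^ 2 - q⁻¹ ^ 2)) • Z q ^ 2 := by
  have := RingQuot.mkAlgHom_rel ℂ (rel.xy (q := q))
  simp only [map_mul, map_smul, map_sub] at this
  rw [pow_two (Z q), X, Y, Z, this]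
  abel

theorem X_pow_mul_Z_sq (n : ℕ) : X q ^ n * Z q ^ 2 = (q ^ 4) ^ n • (Z q ^ 2 * X q ^ n) := by
  refine pow_mul_eq_smul_mul_pow ?_ n
  rw [mul_pow_eq_smul_pow_mul (X_mul_Z q), ← pow_mul]

theorem Y_mul_Z_sq : Y q * Z q ^ 2 = (q⁻¹ ^ 4) • (Z q ^ 2 * Y q) := by
  rw [mul_pow_eq_smul_pow_mul (Y_mul_Z q), ← pow_mul]

/-- `y xⁿ = xⁿ y + yxCoeff q (q ^ 4) n • z² xⁿ⁻¹` and
`yⁿ x = x yⁿ + yxCoeff q (q⁻¹ ^ 4) n • z² yⁿ⁻¹`, see `Y_mul_X_pow_succ` and `Y_pow_succ_mul_X`. -/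
noncomputable def yxCoeff (t : ℂ) (n : ℕ) : ℂ :=
  q * (q ^ 2 - q⁻¹ ^ 2) * ∑ i ∈ Finset.range n, t ^ i

@[simp]
theorem yxCoeff_zero (t : ℂ) : yxCoeff q t 0 = 0 := by
  simp [yxCoeff]

@[simp]
theorem yxCoeff_one (t : ℂ) : yxCoeff q t 1 = q * (q ^ 2 - q⁻¹ ^ 2) := by
  simp [yxCoeff]

theorem Y_mul_X_pow_succ (n : ℕ) :
    Y q * X q ^ (n + 1) =
      X q ^ (n + 1) * Y q + yxCoeff q (q ^ 4) (n + 1) • (Z q ^ 2 * X q ^ n) := by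
  induction n with
  | zero => simp [Y_mul_X]
  | succ n ih =>
    rw [pow_succ _ (n + 1), ← mul_assoc, ih, add_mul, mul_assoc, Y_mul_X, mul_add,
      mul_smul_comm, X_pow_mul_Z_sq, smul_mul_assoc, mul_assoc, ← pow_succ, ← pow_succ,
      ← mul_assoc (X q ^ (n + 1)) (X q) (Y q), ← pow_succ, yxCoeff, yxCoeff,
      geom_sum_succ' (n := n + 1)]
    module

theorem Y_pow_succ_mul_X (n : ℕ) :
    Y q ^ (n + 1) * X q =
      X q * Y q ^ (n + 1) + yxCoeff q (q⁻¹ ^ 4) (n + 1) • (Z q ^ 2 * Y q ^ n) := by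
  induction n with
  | zero => simp [Y_mul_X]
  | succ n ih =>
    rw [pow_succ' _ (n + 1), mul_assoc, ih, mul_add, ← mul_assoc, Y_mul_X, add_mul,
      mul_smul_comm, ← mul_assoc, Y_mul_Z_sq, smul_mul_assoc, smul_mul_assoc,
      mul_assoc (Z q ^ 2) (Y q), ← pow_succ', mul_assoc (X q) (Y q), yxCoeff, yxCoeff,
      geom_sum_succ (n := n + 1)]
    module

noncomputable def monomial (p : ℕ × ℕ × ℕ) : Cq q := Z q ^ p.1 * X q ^ p.2.1 * Y q ^ p.2.2

theorem Z_mul_monomial (a b c : ℕ) : Z q * monomial q (a, b, c) = monomial q (a + 1, b, c) := by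
  simp only [monomial, ← mul_assoc, ← pow_succ']

theorem X_mul_monomial (a b c : ℕ) :
    X q * monomial q (a, b, c) = (q ^ 2) ^ a • monomial q (a, b + 1, c) := by
  simp only [monomial, ← mul_assoc, mul_pow_eq_smul_pow_mul (X_mul_Z q), smul_mul_assoc]
  rw [mul_assoc (Z q ^ a), ← pow_succ']

theorem Y_mul_monomial (a b c : ℕ) :
    Y q * monomial q (a, b, c) = (q⁻¹ ^ 2) ^ a • monomial q (a, b, c + 1)
      + ((q⁻¹ ^ 2) ^ a * yxCoeff q (q ^ 4) b) • monomial q (a + 2, b - 1, c) := by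
  simp only [monomial, ← mul_assoc, mul_pow_eq_smul_pow_mul (Y_mul_Z q), smul_mul_assoc]
  cases b with
  | zero => simp [mul_assoc, ← pow_succ']
  | succ b =>
    rw [mul_assoc (Z q ^ a), Y_mul_X_pow_succ]
    simp only [mul_add, add_mul, mul_smul_comm, smul_mul_assoc, ← mul_assoc, ← pow_add]
    rw [mul_assoc _ (Y q), ← pow_succ', Nat.add_sub_cancel]
    module

theorem monomial_mul_Z (a b c : ℕ) :
    monomial q (a, b, c) * Z q = ((q ^ 2) ^ b * (q⁻¹ ^ 2) ^ c) • monomial q (a + 1, b, c) := by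
  simp only [monomial, mul_assoc, pow_mul_eq_smul_mul_pow (Y_mul_Z q), mul_smul_comm]
  simp only [← mul_assoc, pow_mul_eq_smul_mul_pow (X_mul_Z q), mul_smul_comm, smul_mul_assoc,
    ← pow_succ, smul_smul]
  rw [mul_comm ((q ^ 2) ^ b)]

theorem monomial_mul_X (a b c : ℕ) :
    monomial q (a, b, c) * X q = monomial q (a, b + 1, c)
      + ((q ^ 4) ^ b * yxCoeff q (q⁻¹ ^ 4) c) • monomial q (a + 2, b, c - 1) := by
  cases c with
  | zero => simp [monomial, mul_assoc, ← pow_succ]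
  | succ c =>
    simp only [monomial, mul_assoc, Y_pow_succ_mul_X, mul_add, mul_smul_comm]
    simp only [← mul_assoc, X_pow_mul_Z_sq, ← pow_succ, smul_mul_assoc, mul_smul_comm, ← pow_add,
      Nat.add_sub_cancel, smul_smul]
    module

theorem monomial_mul_Y (a b c : ℕ) : monomial q (a, b, c) * Y q = monomial q (a, b, c + 1) := by
  rw [monomial, monomial, mul_assoc, ← pow_succ]

theorem adjoin_X_Y_Z : Algebra.adjoin ℂ {X q, Y q, Z q} = ⊤ := by
  have : {X q, Y q, Z q} = RingQuot.mkAlgHom ℂ (rel q) '' Set.range (FreeAlgebra.ι ℂ) := by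
    ext u
    constructor
    · rintro (rfl | rfl | rfl)
      exacts [⟨_, ⟨.x, rfl⟩, rfl⟩, ⟨_, ⟨.y, rfl⟩, rfl⟩, ⟨_, ⟨.z, rfl⟩, rfl⟩]
    · rintro ⟨_, ⟨t, rfl⟩, rfl⟩
      cases t <;> simp [X, Y, Z, x, y, z]
  rw [this, Algebra.adjoin_image, FreeAlgebra.adjoin_range_ι, Algebra.map_top,
    AlgHom.range_eq_top]
  exact RingQuot.mkAlgHom_surjective ℂ (rel q)

theorem span_range_monomial : Submodule.span ℂ (Set.range (monomial q)) = ⊤ := by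
  refine Submodule.span_eq_top_of_mul_mem (adjoin_X_Y_Z q)
    (Submodule.subset_span ⟨(0, 0, 0), by simp [monomial]⟩) ?_
  rintro g hg _ ⟨⟨a, b, c⟩, rfl⟩
  have mem (p) : monomial q p ∈ Submodule.span ℂ (Set.range (monomial q)) :=
    Submodule.subset_span ⟨p, rfl⟩
  rcases hg with rfl | rfl | rfl
  · rw [X_mul_monomial]
    exact Submodule.smul_mem _ _ (mem _)
  · rw [Y_mul_monomial]
    exact add_mem (Submodule.smul_mem _ _ (mem _)) (Submodule.smul_mem _ _ (mem _))
  · rw [Z_mul_monomial]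
    exact mem _

theorem pq_eq_monomial : pq q = q⁻¹ • monomial q (0, 1, 1) + q ^ 2 • monomial q (2, 0, 0) := by
  simp [pq, monomial, sq]

theorem Z_mul_pq : Z q * pq q = pq q * Z q := by
  simp only [pq_eq_monomial, mul_add, add_mul, mul_smul_comm, smul_mul_assoc, Z_mul_monomial,
    monomial_mul_Z]
  match_scalars <;> field_simp

theorem X_mul_pq : X q * pq q = pq q * X q := by
  simp only [pq_eq_monomial, mul_add, add_mul, mul_smul_comm, smul_mul_assoc, X_mul_monomial,
    monomial_mul_X, yxCoeff_zero, yxCoeff_one, mul_zero, zero_smul, add_zero, smul_add]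
  match_scalars
  · field_simp
  · field_simp
    ring

theorem Y_mul_pq (hq0 : q ≠ 0) : Y q * pq q = pq q * Y q := by
  simp only [pq_eq_monomial, mul_add, add_mul, mul_smul_comm, smul_mul_assoc, Y_mul_monomial,
    monomial_mul_Y, yxCoeff_zero, yxCoeff_one, mul_zero, zero_smul, add_zero, smul_add]
  match_scalars
  · field_simp
  · field_simp
    ring

theorem pq_mem_center (hq0 : q ≠ 0) : pq q ∈ Subalgebra.center ℂ (Cq q) := by
  rw [Subalgebra.mem_center_iff]
  intro u
  have hu : u ∈ Subalgebra.centralizer ℂ (Subalgebra.centralizer ℂ {X q, Y q, Z q}) :=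
    Algebra.adjoin_le_centralizer_centralizer ℂ _ (adjoin_X_Y_Z q ▸ Algebra.mem_top)
  refine (hu (pq q) ?_).symm
  rintro g (rfl | rfl | rfl)
  exacts [X_mul_pq q, Y_mul_pq q hq0, Z_mul_pq q]

theorem adjoin_pq_le_center (hq0 : q ≠ 0) :
    Algebra.adjoin ℂ {pq q} ≤ Subalgebra.center ℂ (Cq q) :=
  Algebra.adjoin_le (Set.singleton_subset_iff.2 (pq_mem_center q hq0))

end Relations

section Operators

variable (q : ℂ)

abbrev Coeffs := ℕ × ℕ × ℕ →₀ ℂ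

/-! Left multiplication by `z`, `x`, `y` and right multiplication by `z`, `x`, in the coordinates of
the monomials `z^a x^b y^c` (the weights are read off from `Y_mul_monomial`, `monomial_mul_X`, …). -/

noncomputable def lmulZ : Module.End ℂ Coeffs :=
  weightedShift (fun p => (p.1 + 1, p.2.1, p.2.2)) 1

noncomputable def lmulX : Module.End ℂ Coeffs :=
  weightedShift (fun p => (p.1, p.2.1 + 1, p.2.2)) fun p => (q ^ 2) ^ p.1

noncomputable def lmulY : Module.End ℂ Coeffs :=
  weightedShift (fun p => (p.1, p.2.1, p.2.2 + 1)) (fun p => (q⁻¹ ^ 2) ^ p.1) +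
    weightedShift (fun p => (p.1 + 2, p.2.1 - 1, p.2.2))
      fun p => (q⁻¹ ^ 2) ^ p.1 * yxCoeff q (q ^ 4) p.2.1

noncomputable def rmulZ : Module.End ℂ Coeffs :=
  weightedShift (fun p => (p.1 + 1, p.2.1, p.2.2)) fun p => (q ^ 2) ^ p.2.1 * (q⁻¹ ^ 2) ^ p.2.2

noncomputable def rmulX : Module.End ℂ Coeffs :=
  weightedShift (fun p => (p.1, p.2.1 + 1, p.2.2)) 1 +
    weightedShift (fun p => (p.1 + 2, p.2.1, p.2.2 - 1))
      fun p => (q ^ 4) ^ p.2.1 * yxCoeff q (q⁻¹ ^ 4) p.2.2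

theorem lmulX_mul_lmulZ : lmulX q * lmulZ = q ^ 2 • (lmulZ * lmulX q) := by
  ext ⟨a, b, c⟩ : 2
  simp only [lmulX, lmulZ, LinearMap.comp_apply, lsingle_apply, Module.End.mul_apply,
    LinearMap.smul_apply, weightedShift_single, smul_single, smul_eq_mul, Pi.one_apply]
  congr 1
  ring

theorem lmulY_mul_lmulZ : lmulY q * lmulZ = q⁻¹ ^ 2 • (lmulZ * lmulY q) := by
  ext ⟨a, b, c⟩ : 2
  simp only [lmulY, lmulZ, LinearMap.comp_apply, lsingle_apply, Module.End.mul_apply,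
    LinearMap.smul_apply, LinearMap.add_apply, map_add, weightedShift_single, smul_single,
    smul_add, smul_eq_mul, Pi.one_apply]
  congr 2 <;> ring

theorem lmulX_mul_lmulY (hq0 : q ≠ 0) :
    lmulX q * lmulY q = lmulY q * lmulX q - (q * (q ^ 2 - q⁻¹ ^ 2)) • (lmulZ * lmulZ) := by
  ext ⟨a, b, c⟩ : 2
  have hinv : (q ^ 2) ^ a * (q⁻¹ ^ 2) ^ a = 1 := by
    rw [← mul_pow, ← mul_pow, mul_inv_cancel₀ hq0, one_pow, one_pow]
  simp only [lmulX, lmulY, lmulZ, LinearMap.comp_apply, lsingle_apply, Module.End.mul_apply,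
    LinearMap.smul_apply, LinearMap.sub_apply, LinearMap.add_apply, map_add, weightedShift_single,
    smul_single, smul_eq_mul, Pi.one_apply, one_mul, mul_one, add_sub_assoc,
    show a + 1 + 1 = a + 2 from rfl]
  cases b with
  | zero =>
    have hQ : (q ^ 2) ^ a * ((q⁻¹ ^ 2) ^ a * yxCoeff q (q ^ 4) (0 + 1)) - q * (q ^ 2 - q⁻¹ ^ 2)
        = 0 := by
      rw [← mul_assoc, hinv, one_mul, zero_add, yxCoeff_one, sub_self]
    simp only [yxCoeff_zero, mul_zero, zero_mul, single_zero, add_zero, Nat.add_sub_cancel,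
      ← single_sub]
    rw [hQ, single_zero, add_zero, mul_comm]
  | succ b =>
    simp only [Nat.add_sub_cancel, ← single_sub]
    congr 2
    · ring
    · rw [yxCoeff, yxCoeff, geom_sum_succ (n := b + 1)]
      linear_combination (-(q * (q ^ 2 - q⁻¹ ^ 2))) * hinv

variable (f : Coeffs) (A B C : ℕ)

theorem lmulZ_apply_zero : lmulZ f (0, B, C) = 0 :=
  weightedShift_apply_eq_zero f fun p hp => absurd (congrArg Prod.fst hp) (by simp)

theorem lmulZ_apply_succ : lmulZ f (A + 1, B, C) = f (A, B, C) := by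
  rw [lmulZ, weightedShift_apply_of_eq f (p := (A, B, C)) rfl, Pi.one_apply, mul_one]
  rintro ⟨a, b, c⟩ h hne
  simp_all

theorem rmulZ_apply_succ :
    rmulZ q f (A + 1, B, C) = f (A, B, C) * ((q ^ 2) ^ B * (q⁻¹ ^ 2) ^ C) := by
  rw [rmulZ, weightedShift_apply_of_eq f (p := (A, B, C)) rfl]
  rintro ⟨a, b, c⟩ h hne
  simp_all

theorem lmulX_apply_zero : lmulX q f (A, 0, C) = 0 :=
  weightedShift_apply_eq_zero f fun p hp => absurd (congrArg (·.2.1) hp) (by simp)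

theorem lmulX_apply_succ : lmulX q f (A, B + 1, C) = f (A, B, C) * (q ^ 2) ^ A := by
  rw [lmulX, weightedShift_apply_of_eq f (p := (A, B, C)) rfl]
  rintro ⟨a, b, c⟩ h hne
  simp_all

theorem rmulX_apply_succ_of_forall_lt (h : ∀ a < A, ∀ b c, f (a, b, c) = 0) :
    rmulX q f (A, B + 1, C) = f (A, B, C) := by
  rw [rmulX, LinearMap.add_apply, Finsupp.add_apply,
    weightedShift_apply_of_eq f (p := (A, B, C)) rfl, weightedShift_apply_eq_zero, Pi.one_apply,
    mul_one, add_zero]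
  · rintro ⟨a, b, c⟩ hp
    simp only [Prod.mk.injEq] at hp
    rw [h a (by omega), zero_mul]
  · rintro ⟨a, b, c⟩ hp hne
    simp_all

theorem lmulY_apply_zero_succ : lmulY q f (0, B, C + 1) = f (0, B, C) := by
  rw [lmulY, LinearMap.add_apply, Finsupp.add_apply,
    weightedShift_apply_of_eq f (p := (0, B, C)) rfl,
    weightedShift_apply_eq_zero f fun p hp => absurd (congrArg Prod.fst hp) (by simp)]
  · simp
  · rintro ⟨a, b, c⟩ h hne
    simp_all

end Operators

section Basis

variable {q : ℂ}

noncomputable def regRep (hq0 : q ≠ 0) : Cq q →ₐ[ℂ] Module.End ℂ Coeffs :=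
  RingQuot.liftAlgHom ℂ ⟨FreeAlgebra.lift ℂ fun | .x => lmulX q | .y => lmulY q | .z => lmulZ, by
    rintro _ _ (_ | _ | _) <;>
      simp only [x, y, z, map_mul, map_sub, map_smul, FreeAlgebra.lift_ι_apply]
    exacts [lmulX_mul_lmulZ q, lmulX_mul_lmulY q hq0, lmulY_mul_lmulZ q]⟩

variable (hq0 : q ≠ 0)

@[simp] theorem regRep_X : regRep hq0 (X q) = lmulX q := by simp [regRep, X, x]
@[simp] theorem regRep_Y : regRep hq0 (Y q) = lmulY q := by simp [regRep, Y, y]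
@[simp] theorem regRep_Z : regRep hq0 (Z q) = lmulZ := by simp [regRep, Z, z]

theorem regRep_pq : regRep hq0 (pq q) = q⁻¹ • (lmulX q * lmulY q) + q ^ 2 • (lmulZ * lmulZ) := by
  simp [pq]

theorem regRep_monomial (a b c : ℕ) :
    regRep hq0 (monomial q (a, b, c)) (single (0, 0, 0) 1) = single (a, b, c) 1 := by
  have hY (c : ℕ) : (lmulY q ^ c) (single (0, 0, 0) 1) = single (0, 0, c) 1 := by
    induction c with
    | zero => rfl
    | succ c ih => rw [pow_succ', Module.End.mul_apply, ih]; simp [lmulY]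
  have hX (b : ℕ) : (lmulX q ^ b) (single (0, 0, c) 1) = single (0, b, c) 1 := by
    induction b with
    | zero => rfl
    | succ b ih => rw [pow_succ', Module.End.mul_apply, ih]; simp [lmulX]
  have hZ (a : ℕ) : (lmulZ ^ a) (single (0, b, c) 1) = single (a, b, c) 1 := by
    induction a with
    | zero => rfl
    | succ a ih => rw [pow_succ', Module.End.mul_apply, ih]; simp [lmulZ]
  simp [monomial, hX, hY, hZ]

theorem linearIndependent_monomial (hq0 : q ≠ 0) : LinearIndependent ℂ (monomial q) := by
  refine LinearIndependent.of_comp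
    (LinearMap.applyₗ (single (0, 0, 0) 1) ∘ₗ (regRep hq0).toLinearMap) ?_
  convert linearIndependent_single_one (ι := ℕ × ℕ × ℕ) (R := ℂ) with ⟨a, b, c⟩
  simp [regRep_monomial]

noncomputable def pbwBasis (hq0 : q ≠ 0) : Module.Basis (ℕ × ℕ × ℕ) ℂ (Cq q) :=
  .mk (linearIndependent_monomial hq0) (span_range_monomial q).ge

@[simp]
theorem pbwBasis_apply (p : ℕ × ℕ × ℕ) : pbwBasis hq0 p = monomial q p :=
  Module.Basis.mk_apply _ _ p

@[simp]
theorem repr_monomial (p : ℕ × ℕ × ℕ) : (pbwBasis hq0).repr (monomial q p) = single p 1 := by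
  rw [← pbwBasis_apply hq0, Module.Basis.repr_self]

theorem pbwBasis_repr (u : Cq q) :
    (pbwBasis hq0).repr u = regRep hq0 u (single (0, 0, 0) 1) := by
  refine LinearMap.congr_fun ((pbwBasis hq0).ext (f₁ := (pbwBasis hq0).repr.toLinearMap)
    (f₂ := LinearMap.applyₗ (single (0, 0, 0) 1) ∘ₗ (regRep hq0).toLinearMap) ?_) u
  rintro ⟨a, b, c⟩
  simp [regRep_monomial]

theorem repr_mul (a u : Cq q) :
    (pbwBasis hq0).repr (a * u) = regRep hq0 a ((pbwBasis hq0).repr u) := by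
  simp [pbwBasis_repr]

theorem repr_mul_Z (u : Cq q) :
    (pbwBasis hq0).repr (u * Z q) = rmulZ q ((pbwBasis hq0).repr u) :=
  (pbwBasis hq0).repr_mul_eq_of_forall_basis_mul _ (fun ⟨a, b, c⟩ => by
    simp only [pbwBasis_apply, monomial_mul_Z, map_smul, repr_monomial, rmulZ,
      weightedShift_single, smul_single, smul_eq_mul, one_mul, mul_one]) u

theorem repr_mul_X (u : Cq q) :
    (pbwBasis hq0).repr (u * X q) = rmulX q ((pbwBasis hq0).repr u) :=
  (pbwBasis hq0).repr_mul_eq_of_forall_basis_mul _ (fun ⟨a, b, c⟩ => by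
    simp only [pbwBasis_apply, monomial_mul_X, map_add, map_smul, repr_monomial, rmulX,
      LinearMap.add_apply, weightedShift_single, smul_single, smul_eq_mul, one_mul, mul_one,
      Pi.one_apply]) u

theorem repr_pq_pow_apply_diag (n b : ℕ) :
    (pbwBasis hq0).repr (pq q ^ n) (0, b, b) = if b = n then q⁻¹ ^ n else 0 := by
  induction n generalizing b with
  | zero => simp [pbwBasis_repr, single_apply, eq_comm]
  | succ n ih =>
    rw [pow_succ', repr_mul, regRep_pq]
    simp only [LinearMap.add_apply, LinearMap.smul_apply, Module.End.mul_apply,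
      Finsupp.add_apply, Finsupp.smul_apply, lmulZ_apply_zero, smul_eq_mul, mul_zero, add_zero]
    cases b with
    | zero => rw [lmulX_apply_zero, mul_zero, if_neg n.succ_ne_zero.symm]
    | succ b =>
      rw [lmulX_apply_succ, lmulY_apply_zero_succ, ih, pow_zero, mul_one]
      split_ifs <;> simp_all [pow_succ']

end Basis

section Center

variable {q : ℂ} (hq0 : q ≠ 0) {u : Cq q}

theorem repr_apply_eq_zero_of_mem_center_of_ne (hq : ∀ k : ℕ, 0 < k → q ^ k ≠ 1)
    (hu : u ∈ Subalgebra.center ℂ (Cq q)) (A : ℕ) {B C : ℕ} (hBC : B ≠ C) :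
    (pbwBasis hq0).repr u (A, B, C) = 0 := by
  have h := congrArg (fun v => (pbwBasis hq0).repr v (A + 1, B, C))
    (Subalgebra.mem_center_iff.1 hu (Z q))
  rw [repr_mul_Z, repr_mul, regRep_Z, lmulZ_apply_succ, rmulZ_apply_succ] at h
  have hw : (q ^ 2) ^ B * (q⁻¹ ^ 2) ^ C ≠ 1 := by
    intro hw
    rw [inv_pow, inv_pow, ← pow_mul, ← pow_mul, mul_inv_eq_one₀ (pow_ne_zero _ hq0)] at hw
    exact hBC (by have := pow_injective_of_pow_ne_one hq0 hq hw; omega)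
  exact (mul_right_eq_self₀.1 h.symm).resolve_left hw

theorem eq_zero_of_mem_center_of_repr_diag (hq : ∀ k : ℕ, 0 < k → q ^ k ≠ 1)
    (hu : u ∈ Subalgebra.center ℂ (Cq q))
    (hdiag : ∀ b, (pbwBasis hq0).repr u (0, b, b) = 0) : u = 0 := by
  refine (pbwBasis hq0).repr.injective ?_
  rw [map_zero]
  ext ⟨A, B, C⟩
  rw [coe_zero, Pi.zero_apply]
  induction A using Nat.strong_induction_on generalizing B C with
  | _ A ih =>
  rcases A with _ | A
  · rcases eq_or_ne B C with rfl | hBC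
    exacts [hdiag B, repr_apply_eq_zero_of_mem_center_of_ne hq0 hq hu 0 hBC]
  · have h := congrArg (fun v => (pbwBasis hq0).repr v (A + 1, B + 1, C))
      (Subalgebra.mem_center_iff.1 hu (X q))
    rw [repr_mul_X, repr_mul, regRep_X, lmulX_apply_succ,
      rmulX_apply_succ_of_forall_lt q _ (A + 1) B C ih] at h
    have hw : (q ^ 2) ^ (A + 1) ≠ 1 := by
      rw [← pow_mul]
      exact hq _ (by omega)
    exact (mul_right_eq_self₀.1 h).resolve_left hw

theorem center_le_adjoin_pq (hq0 : q ≠ 0) (hq : ∀ k : ℕ, 0 < k → q ^ k ≠ 1) :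
    Subalgebra.center ℂ (Cq q) ≤ Algebra.adjoin ℂ {pq q} := by
  classical
  intro u hu
  set f := (pbwBasis hq0).repr u
  -- the polynomial in `pq` with the same coefficients as `u` at the monomials `x^b y^b`
  set v := ∑ b ∈ f.support.image (·.2.1), (q ^ b * f (0, b, b)) • pq q ^ b
  have hv : v ∈ Algebra.adjoin ℂ {pq q} := Subalgebra.sum_mem _ fun b _ =>
    Subalgebra.smul_mem _ (Subalgebra.pow_mem _ (Algebra.self_mem_adjoin_singleton ℂ _) b) _
  have hdiag (b : ℕ) : (pbwBasis hq0).repr (u - v) (0, b, b) = 0 := by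
    simp only [v, map_sub, map_sum, map_smul, Finsupp.sub_apply, Finsupp.finsetSum_apply,
      Finsupp.smul_apply, repr_pq_pow_apply_diag, smul_eq_mul, mul_ite, mul_zero,
      Finset.sum_ite_eq]
    split_ifs with hb
    · rw [mul_right_comm, ← mul_pow, mul_inv_cancel₀ hq0, one_pow, one_mul, sub_self]
    · rw [sub_zero]
      by_contra hne
      exact hb (Finset.mem_image.2 ⟨(0, b, b), Finsupp.mem_support_iff.2 hne, rfl⟩)
  have huv := eq_zero_of_mem_center_of_repr_diag hq0 hq
    (sub_mem hu (adjoin_pq_le_center q hq0 hv)) hdiag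
  rwa [sub_eq_zero.1 huv]

end Center

end CqXYZ

open CqXYZ in
/-- for `q` not a root of unity, the center of `ℂ_q[x,y,z]` equals the unital
subalgebra generated by `p_q = q⁻¹xy + q²z²`. -/
theorem center_Cq_eq_adjoin_pq (q : ℂ) (hq0 : q ≠ 0)
    (hq : ∀ k : ℕ, 0 < k → q ^ k ≠ 1) :
    Subalgebra.center ℂ (Cq q) = Algebra.adjoin ℂ {pq q} :=
  le_antisymm (center_le_adjoin_pq hq0 hq) (adjoin_pq_le_center q hq0)
end

section
/- Let q ∈ ℂ× be not a root of unity and n ≥ 2. Let ℂ_q[x,y] be the quotient of the free unital associative ℂ-algebra on generators x₁,…,xₙ,y₁,…,yₙ by the two-sided ideal generated by the elements x_i x_j − q x_j x_i, q y_i y_j − y_j y_i, q x_i y_j − y_j x_i, and x_j y_i − q y_i x_j for all 1 ≤ i < j ≤ n. Then the center of ℂ_q[x,y] consists exactly of the scalar multiples of the identity: Z(ℂ_q[x,y]) = ℂ·1. -/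
namespace CqXY

/-- The generator `x_i` of the free algebra on `x₁,…,xₙ,y₁,…,yₙ`. -/
noncomputable def x {n : ℕ} (i : Fin n) : FreeAlgebra ℂ (Fin n ⊕ Fin n) :=
  FreeAlgebra.ι ℂ (Sum.inl i)

/-- The generator `y_i` of the free algebra on `x₁,…,xₙ,y₁,…,yₙ`. -/
noncomputable def y {n : ℕ} (i : Fin n) : FreeAlgebra ℂ (Fin n ⊕ Fin n) :=
  FreeAlgebra.ι ℂ (Sum.inr i)

/-- The defining relations of `ℂ_q[x,y]`: for `1 ≤ i < j ≤ n`,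
`x_i x_j = q x_j x_i`, `q y_i y_j = y_j y_i`, `q x_i y_j = y_j x_i`, `x_j y_i = q y_i x_j`. -/
inductive rel (q : ℂ) (n : ℕ) :
    FreeAlgebra ℂ (Fin n ⊕ Fin n) → FreeAlgebra ℂ (Fin n ⊕ Fin n) → Prop
  | xx : ∀ i j : Fin n, i < j → rel q n (x i * x j) (q • (x j * x i))
  | yy : ∀ i j : Fin n, i < j → rel q n (q • (y i * y j)) (y j * y i)
  | xy : ∀ i j : Fin n, i < j → rel q n (q • (x i * y j)) (y j * x i)
  | yx : ∀ i j : Fin n, i < j → rel q n (x j * y i) (q • (y i * x j))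

/-- `ℂ_q[x,y]`, the quotient of the free unital associative ℂ-algebra on
`x₁,…,xₙ,y₁,…,yₙ` by the two-sided ideal generated by the relations above. -/
abbrev Cq (q : ℂ) (n : ℕ) := RingQuot (rel q n)

end CqXY

/-!
`ℂ_q[x,y]` is a twisted monoid algebra: its normal-ordered monomials are indexed by
`W = (Fin n → FreeMonoid Bool)`, and it acts faithfully on `ℂ[W]` by left multiplication twisted
by the bicharacter `q ^ twist`. The twisted right multiplications commute with this action. So if
`z` is central, then `f = z • δ₁` satisfies `L_g f = R_g f` for every generator `g`; hence each
word `w` in the support of `f` has `w * g` in `g * supp f`. For `g = xᵢ` and `g = yᵢ` this says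
that the `i`-th component of `w` starts with both `x` and `y`, so `w = 1` and `z` is the scalar
`f 1`.
-/

section TwistedRegular

variable {M K : Type*} [Monoid M] [CommSemiring K]

def IsTwoCocycle (c : M → M → K) : Prop :=
  ∀ u v w, c u v * c (u * v) w = c v w * c u (v * w)

noncomputable def twistedLeftMul (c : M → M → K) (u : M) : Module.End K (M →₀ K) :=
  Finsupp.lift (M →₀ K) K M fun w => Finsupp.single (u * w) (c u w)

noncomputable def twistedRightMul (c : M → M → K) (v : M) : Module.End K (M →₀ K) :=
  Finsupp.lift (M →₀ K) K M fun w => Finsupp.single (w * v) (c w v)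

variable {c : M → M → K}

@[simp] lemma twistedLeftMul_single (u w : M) (a : K) :
    twistedLeftMul c u (Finsupp.single w a) = Finsupp.single (u * w) (a * c u w) := by
  simp [twistedLeftMul]

@[simp] lemma twistedRightMul_single (v w : M) (a : K) :
    twistedRightMul c v (Finsupp.single w a) = Finsupp.single (w * v) (a * c w v) := by
  simp [twistedRightMul]

lemma IsTwoCocycle.twistedLeftMul_mul (hc : IsTwoCocycle c) (u v : M) :
    twistedLeftMul c u * twistedLeftMul c v = c u v • twistedLeftMul c (u * v) := by
  refine Finsupp.lhom_ext fun w a => ?_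
  simp only [Module.End.mul_apply, LinearMap.smul_apply, twistedLeftMul_single,
    Finsupp.smul_single, smul_eq_mul, mul_assoc]
  congr 1
  rw [mul_left_comm (c u v), ← hc u v w, mul_left_comm]

lemma IsTwoCocycle.commute_twistedLeftMul_twistedRightMul (hc : IsTwoCocycle c) (u v : M) :
    Commute (twistedLeftMul c u) (twistedRightMul c v) := by
  refine Finsupp.lhom_ext fun w a => ?_
  simp only [Module.End.mul_apply, twistedLeftMul_single, twistedRightMul_single, mul_assoc,
    hc u w v]

lemma twistedRightMul_apply_mul [IsRightCancelMul M] (f : M →₀ K) (v w : M) :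
    twistedRightMul c v f (w * v) = f w * c w v := by
  induction f using Finsupp.induction_linear with
  | zero => simp
  | add f g hf hg => simp [hf, hg, add_mul]
  | single w' a =>
    rw [twistedRightMul_single]
    by_cases h : w' = w <;> simp [h]

lemma twistedLeftMul_apply_eq_zero (f : M →₀ K) {u x : M}
    (h : ∀ w ∈ f.support, u * w ≠ x) :
    twistedLeftMul c u f x = 0 := by
  rw [twistedLeftMul, Finsupp.lift_apply, Finsupp.sum, Finsupp.finsetSum_apply]
  exact Finset.sum_eq_zero fun w hw => by simp [h w hw]

lemma exists_mul_eq_of_twistedLeftMul_eq_twistedRightMul [IsRightCancelMul M] [NoZeroDivisors K]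
    {f : M →₀ K} {v w₀ : M} (hf : twistedLeftMul c v f = twistedRightMul c v f)
    (hw₀ : w₀ ∈ f.support) (hc : c w₀ v ≠ 0) : ∃ w ∈ f.support, v * w = w₀ * v := by
  by_contra! h
  have := twistedLeftMul_apply_eq_zero (c := c) f h
  rw [hf, twistedRightMul_apply_mul] at this
  exact mul_ne_zero (Finsupp.mem_support_iff.1 hw₀) hc this

lemma twistedLeftMul_apply_eq_twistedRightMul_apply {T : Module.End K (M →₀ K)} {g : M}
    (hL : Commute T (twistedLeftMul c g)) (hR : Commute T (twistedRightMul c g))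
    (hg1 : c g 1 = 1) (h1g : c 1 g = 1) :
    twistedLeftMul c g (T (Finsupp.single 1 1))
      = twistedRightMul c g (T (Finsupp.single 1 1)) := by
  rw [← Module.End.mul_apply, ← hL.eq, ← Module.End.mul_apply, ← hR.eq]
  simp [hg1, h1g]

end TwistedRegular

theorem FreeMonoid.eq_one_of_of_mul_eq_mul_of {α : Type*} {a b : α} (hab : a ≠ b)
    {u v w : FreeMonoid α} (ha : of a * v = u * of a) (hb : of b * w = u * of b) : u = 1 := by
  cases u with
  | one => rfl
  | of_mul d t =>
    have ha' := congrArg (fun x => x.toList.head?) ha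
    have hb' := congrArg (fun x => x.toList.head?) hb
    simp only [toList_mul, toList_of, List.cons_append, List.nil_append, List.head?_cons,
      Option.some.injEq] at ha' hb'
    exact absurd (ha'.trans hb'.symm) hab

theorem FreeMonoid.pi_eq_one_of_forall_mulSingle {ι α : Type*} [DecidableEq ι] [Nontrivial α]
    {u : ι → FreeMonoid α}
    (h : ∀ (i : ι) (a : α),
      ∃ w, (Pi.mulSingle i (of a) : ι → FreeMonoid α) * w = u * Pi.mulSingle i (of a)) :
    u = 1 := by
  obtain ⟨a, b, hab⟩ := exists_pair_ne α
  funext i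
  obtain ⟨v, hv⟩ := h i a
  obtain ⟨w, hw⟩ := h i b
  exact eq_one_of_of_mul_eq_mul_of hab (by simpa using congrFun hv i)
    (by simpa using congrFun hw i)

theorem eq_single_one_of_twistedLeftMul_eq_twistedRightMul {ι α K : Type*} [DecidableEq ι]
    [Nontrivial α] [CommSemiring K] [NoZeroDivisors K]
    {c : (ι → FreeMonoid α) → (ι → FreeMonoid α) → K}
    (hc : ∀ u v, c u v ≠ 0) {f : (ι → FreeMonoid α) →₀ K}
    (hf : ∀ (i : ι) (a : α), twistedLeftMul c (Pi.mulSingle i (.of a)) f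
      = twistedRightMul c (Pi.mulSingle i (.of a)) f) :
    f = Finsupp.single 1 (f 1) := by
  refine Finsupp.support_subset_singleton.1 fun u hu => Finset.mem_singleton.2 ?_
  refine FreeMonoid.pi_eq_one_of_forall_mulSingle fun i a => ?_
  obtain ⟨w, -, hw⟩ := exists_mul_eq_of_twistedLeftMul_eq_twistedRightMul (hf i a) hu (hc _ _)
  exact ⟨w, hw⟩

namespace CqXY

variable {n : ℕ} {q : ℂ}

/-- The `i`-th component of a word is the word in `xᵢ` (`false`) and `yᵢ` (`true`). -/
abbrev Word (n : ℕ) := Fin n → FreeMonoid Bool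

def letter (i : Fin n) (b : Bool) : Word n := Pi.mulSingle i (FreeMonoid.of b)

lemma letter_mul_apply_of_ne {i j : Fin n} (h : j ≠ i) (b : Bool) (w : Word n) :
    (letter i b * w) j = w j := by
  simp [letter, Pi.mulSingle_eq_of_ne h]

/-- The bi-additive extension of the exponents in `gen_swap`: moving a letter to the right past
a lower-indexed one costs `q⁻¹` if both are `x`'s and `q` otherwise. -/
def pairing (u v : FreeMonoid Bool) : ℤ :=
  u.length * v.length - 2 * u.toList.count false * v.toList.count false

lemma pairing_mul_left (u u' v : FreeMonoid Bool) :
    pairing (u * u') v = pairing u v + pairing u' v := by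
  simp only [pairing, FreeMonoid.length_mul, FreeMonoid.toList_mul, List.count_append]
  push_cast; ring

lemma pairing_mul_right (u v v' : FreeMonoid Bool) :
    pairing u (v * v') = pairing u v + pairing u v' := by
  simp only [pairing, FreeMonoid.length_mul, FreeMonoid.toList_mul, List.count_append]
  push_cast; ring

lemma pairing_of_of (s t : Bool) :
    pairing (.of s) (.of t) = if s = false ∧ t = false then -1 else 1 := by
  cases s <;> cases t <;> rfl

/-- `normalMonomial q u * normalMonomial q v = q ^ twist u v • normalMonomial q (u * v)`. -/
def twist (u v : Word n) : ℤ :=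
  ∑ j, ∑ i, if i < j then pairing (u j) (v i) else 0

@[simp] lemma twist_one_left (v : Word n) : twist 1 v = 0 := by simp [twist, pairing]

@[simp] lemma twist_one_right (u : Word n) : twist u 1 = 0 := by simp [twist, pairing]

lemma twist_mul_left (u u' v : Word n) : twist (u * u') v = twist u v + twist u' v := by
  simp only [twist, Pi.mul_apply, pairing_mul_left, ← Finset.sum_add_distrib, ← ite_add_zero]

lemma twist_mul_right (u v v' : Word n) : twist u (v * v') = twist u v + twist u v' := by
  simp only [twist, Pi.mul_apply, pairing_mul_right, ← Finset.sum_add_distrib, ← ite_add_zero]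

lemma twist_letter_left (i : Fin n) (b : Bool) (w : Word n) :
    twist (letter i b) w = ∑ j, if j < i then pairing (.of b) (w j) else 0 := by
  rw [twist, Finset.sum_eq_single i]
  · simp [letter]
  · intro j _ hj
    simp [letter, Pi.mulSingle_eq_of_ne hj, pairing]
  · simp

lemma twist_letter_letter (i j : Fin n) (s t : Bool) :
    twist (letter j s) (letter i t) = if i < j then pairing (.of s) (.of t) else 0 := by
  rw [twist_letter_left, Finset.sum_eq_single i]
  · simp [letter]
  · intro k _ hk
    simp [letter, Pi.mulSingle_eq_of_ne hk, pairing]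
  · simp

variable (q) in
noncomputable def twistCocycle (u v : Word n) : ℂ := q ^ twist u v

lemma isTwoCocycle_twistCocycle (hq0 : q ≠ 0) : IsTwoCocycle (twistCocycle q (n := n)) := by
  intro u v w
  simp only [twistCocycle, ← zpow_add₀ hq0, twist_mul_left, twist_mul_right]
  ring_nf

lemma twistedLeftMul_letter_swap (hq0 : q ≠ 0) {i j : Fin n} (hij : i < j) (s t : Bool) :
    twistedLeftMul (twistCocycle q) (letter j s) * twistedLeftMul (twistCocycle q) (letter i t)
      = q ^ pairing (.of s) (.of t) •
        (twistedLeftMul (twistCocycle q) (letter i t) *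
          twistedLeftMul (twistCocycle q) (letter j s)) := by
  have hc := isTwoCocycle_twistCocycle (n := n) hq0
  rw [hc.twistedLeftMul_mul, hc.twistedLeftMul_mul, twistCocycle, twistCocycle,
    twist_letter_letter, twist_letter_letter, if_pos hij, if_neg hij.not_gt, zpow_zero, one_smul,
    letter, letter, (Pi.mulSingle_commute hij.ne' _ _).eq]

def genFree (i : Fin n) (b : Bool) : FreeAlgebra ℂ (Fin n ⊕ Fin n) :=
  FreeAlgebra.ι ℂ (Equiv.boolProdEquivSum (Fin n) (b, i))

@[simp] lemma genFree_false (i : Fin n) : genFree i false = x i := rfl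

@[simp] lemma genFree_true (i : Fin n) : genFree i true = y i := rfl

lemma forall_rel_imp_eq_iff {A : Type*} [Semiring A] [Algebra ℂ A] (hq0 : q ≠ 0)
    (F : FreeAlgebra ℂ (Fin n ⊕ Fin n) →ₐ[ℂ] A) :
    (∀ ⦃a b⦄, rel q n a b → F a = F b) ↔ ∀ (i j : Fin n) (s t : Bool), i < j →
      F (genFree j s) * F (genFree i t)
        = q ^ pairing (.of s) (.of t) • (F (genFree i t) * F (genFree j s)) := by
  constructor
  · intro h i j s t hij
    cases s <;> cases t <;> simp only [pairing_of_of, genFree_false, genFree_true] <;> norm_num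
    · simpa [inv_smul_smul₀ hq0] using congrArg (q⁻¹ • ·) (h (rel.xx i j hij)).symm
    · simpa using h (rel.yx i j hij)
    · simpa using (h (rel.xy i j hij)).symm
    · simpa using (h (rel.yy i j hij)).symm
  · intro h a b hab
    cases hab with
    | xx i j hij =>
      simpa [pairing_of_of, smul_inv_smul₀ hq0]
        using congrArg (q • ·) (h i j false false hij).symm
    | yy i j hij => simpa [pairing_of_of] using (h i j true true hij).symm
    | xy i j hij => simpa [pairing_of_of] using (h i j true false hij).symm
    | yx i j hij => simpa [pairing_of_of] using h i j false true hij

variable (q) in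
noncomputable def gen (i : Fin n) (b : Bool) : Cq q n :=
  RingQuot.mkAlgHom ℂ (rel q n) (genFree i b)

lemma Cq.induction_on {P : Cq q n → Prop} (z : Cq q n)
    (algebraMap : ∀ r, P (algebraMap ℂ _ r)) (gen : ∀ i b, P (gen q i b))
    (mul : ∀ a b, P a → P b → P (a * b)) (add : ∀ a b, P a → P b → P (a + b)) :
    P z := by
  obtain ⟨a, rfl⟩ := RingQuot.mkAlgHom_surjective ℂ (rel q n) z
  induction a using FreeAlgebra.induction with
  | grade0 r => simpa using algebraMap r
  | grade1 a =>
    obtain ⟨⟨b, i⟩, rfl⟩ := (Equiv.boolProdEquivSum (Fin n)).surjective a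
    exact gen i b
  | mul a b ha hb => simpa using mul _ _ ha hb
  | add a b ha hb => simpa using add _ _ ha hb

lemma gen_swap (hq0 : q ≠ 0) {i j : Fin n} (hij : i < j) (s t : Bool) :
    gen q j s * gen q i t = q ^ pairing (.of s) (.of t) • (gen q i t * gen q j s) :=
  (forall_rel_imp_eq_iff hq0 _).1 (fun _ _ h => RingQuot.mkAlgHom_rel ℂ h) i j s t hij

variable (q) in
noncomputable def wordAt (i : Fin n) : FreeMonoid Bool →* Cq q n := FreeMonoid.lift (gen q i)

variable (q) in
noncomputable def normalMonomial (w : Word n) : Cq q n :=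
  ((List.finRange n).map fun j => wordAt q j (w j)).prod

variable (q) in
@[simp] lemma normalMonomial_one : normalMonomial q (1 : Word n) = 1 := by
  simp [normalMonomial]

lemma gen_mul_wordAt_of_lt (hq0 : q ≠ 0) {i j : Fin n} (hji : j < i) (b : Bool)
    (l : FreeMonoid Bool) :
    gen q i b * wordAt q j l = q ^ pairing (.of b) l • (wordAt q j l * gen q i b) := by
  induction l using FreeMonoid.inductionOn' with
  | one => simp [pairing]
  | of_mul t l ih =>
    rw [map_mul, ← mul_assoc, wordAt, FreeMonoid.lift_eval_of, gen_swap hq0 hji, ← wordAt,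
      smul_mul_assoc, mul_assoc, ih, mul_smul_comm, smul_smul, ← zpow_add₀ hq0,
      ← pairing_mul_right, mul_assoc]

lemma gen_mul_prod_wordAt (hq0 : q ≠ 0) (i : Fin n) (b : Bool) (w : Word n) (js : List (Fin n))
    (hjs : js.Pairwise (· < ·)) (hi : i ∈ js) :
    gen q i b * (js.map fun j => wordAt q j (w j)).prod
      = q ^ (js.map fun j => if j < i then pairing (.of b) (w j) else 0).sum •
        (js.map fun j => wordAt q j ((letter i b * w) j)).prod := by
  induction js with
  | nil => simp at hi
  | cons j js ih =>
    obtain ⟨hj, hjs⟩ := List.pairwise_cons.1 hjs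
    simp only [List.map_cons, List.prod_cons, List.sum_cons]
    rcases List.mem_cons.1 hi with rfl | hi
    · have hsum : (js.map fun k => if k < i then pairing (.of b) (w k) else 0).sum = 0 :=
        List.sum_eq_zero fun x hx => by
          obtain ⟨k, hk, rfl⟩ := List.mem_map.1 hx
          exact if_neg (hj k hk).not_gt
      have hrest : (js.map fun k => wordAt q k ((letter i b * w) k))
          = js.map fun k => wordAt q k (w k) :=
        List.map_congr_left fun k hk => by rw [letter_mul_apply_of_ne (hj k hk).ne']
      rw [hsum, hrest, if_neg (lt_irrefl i), add_zero, zpow_zero, one_smul, ← mul_assoc, letter]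
      simp [wordAt]
    · have hji : j < i := hj i hi
      rw [← mul_assoc, gen_mul_wordAt_of_lt hq0 hji, smul_mul_assoc, mul_assoc, ih hjs hi,
        mul_smul_comm, smul_smul, ← zpow_add₀ hq0, if_pos hji,
        letter_mul_apply_of_ne hji.ne]

lemma gen_mul_normalMonomial (hq0 : q ≠ 0) (i : Fin n) (b : Bool) (w : Word n) :
    gen q i b * normalMonomial q w
      = q ^ twist (letter i b) w • normalMonomial q (letter i b * w) := by
  rw [normalMonomial, gen_mul_prod_wordAt hq0 i b w _ (List.pairwise_lt_finRange n)
    (List.mem_finRange i), twist_letter_left, Fin.sum_univ_def]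
  rfl

variable (q) in
noncomputable def twistedRepFree :
    FreeAlgebra ℂ (Fin n ⊕ Fin n) →ₐ[ℂ] Module.End ℂ (Word n →₀ ℂ) :=
  FreeAlgebra.lift ℂ fun a =>
    twistedLeftMul (twistCocycle q) (letter ((Equiv.boolProdEquivSum _).symm a).2
      ((Equiv.boolProdEquivSum _).symm a).1)

lemma twistedRepFree_genFree (i : Fin n) (b : Bool) :
    twistedRepFree q (genFree i b) = twistedLeftMul (twistCocycle q) (letter i b) := by
  rw [twistedRepFree, genFree, FreeAlgebra.lift_ι_apply, Equiv.symm_apply_apply]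

lemma twistedRepFree_rel (hq0 : q ≠ 0) ⦃a b : FreeAlgebra ℂ (Fin n ⊕ Fin n)⦄
    (h : rel q n a b) :
    twistedRepFree q a = twistedRepFree q b :=
  (forall_rel_imp_eq_iff hq0 _).2 (fun i j s t hij => by
    simpa only [twistedRepFree_genFree] using twistedLeftMul_letter_swap hq0 hij s t) h

noncomputable def twistedRep (hq0 : q ≠ 0) :
    Cq q n →ₐ[ℂ] Module.End ℂ (Word n →₀ ℂ) :=
  RingQuot.liftAlgHom ℂ ⟨twistedRepFree q, twistedRepFree_rel hq0⟩

lemma twistedRep_gen (hq0 : q ≠ 0) (i : Fin n) (b : Bool) :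
    twistedRep hq0 (gen q i b) = twistedLeftMul (twistCocycle q) (letter i b) := by
  rw [twistedRep, gen, RingQuot.liftAlgHom_mkAlgHom_apply, twistedRepFree_genFree]

lemma commute_twistedRep_twistedRightMul (hq0 : q ≠ 0) (z : Cq q n) (v : Word n) :
    Commute (twistedRep hq0 z) (twistedRightMul (twistCocycle q) v) := by
  induction z using Cq.induction_on with
  | algebraMap r => rw [AlgHom.commutes]; exact Algebra.commute_algebraMap_left r _
  | gen i b =>
    rw [twistedRep_gen]
    exact (isTwoCocycle_twistCocycle hq0).commute_twistedLeftMul_twistedRightMul _ _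
  | mul a b ha hb => rw [map_mul]; exact ha.mul_left hb
  | add a b ha hb => rw [map_add]; exact ha.add_left hb

variable (q) in
noncomputable def monomialCombination : (Word n →₀ ℂ) →ₗ[ℂ] Cq q n :=
  Finsupp.linearCombination ℂ (normalMonomial q)

lemma monomialCombination_twistedRep_apply (hq0 : q ≠ 0) (z : Cq q n) (v : Word n →₀ ℂ) :
    monomialCombination q (twistedRep hq0 z v) = z * monomialCombination q v := by
  induction z using Cq.induction_on generalizing v with
  | algebraMap r => simp [Algebra.smul_def]
  | gen i b =>
    suffices monomialCombination q ∘ₗ twistedRep hq0 (gen q i b)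
        = LinearMap.mulLeft ℂ (gen q i b) ∘ₗ monomialCombination q from
      LinearMap.congr_fun this v
    refine Finsupp.lhom_ext fun w c => ?_
    simp only [LinearMap.comp_apply, twistedRep_gen, twistedLeftMul_single, monomialCombination,
      Finsupp.linearCombination_single, LinearMap.mulLeft_apply, mul_smul_comm,
      gen_mul_normalMonomial hq0, smul_smul, twistCocycle]
  | mul a b ha hb => rw [map_mul, Module.End.mul_apply, ha, hb, mul_assoc]
  | add a b ha hb => rw [map_add, LinearMap.add_apply, map_add, ha, hb, add_mul]

lemma monomialCombination_twistedRep_single_one (hq0 : q ≠ 0) (z : Cq q n) :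
    monomialCombination q (twistedRep hq0 z (Finsupp.single 1 1)) = z := by
  rw [monomialCombination_twistedRep_apply]
  simp [monomialCombination]

end CqXY

open CqXY in
theorem center_CqXY_trivial_general (n : ℕ)
    (q : ℂ) (hq0 : q ≠ 0) :
    Subalgebra.center ℂ (Cq q n) = ⊥ := by
  refine eq_bot_iff.2 fun z hz => Algebra.mem_bot.2 ?_
  set f := twistedRep hq0 z (Finsupp.single 1 1)
  have hf (i : Fin n) (b : Bool) :
      twistedLeftMul (twistCocycle q) (letter i b) f
        = twistedRightMul (twistCocycle q) (letter i b) f := by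
    have hzg : Commute z (gen q i b) := (Subalgebra.mem_center_iff.1 hz _).symm
    refine twistedLeftMul_apply_eq_twistedRightMul_apply ?_
      (commute_twistedRep_twistedRightMul hq0 z _) (by simp [twistCocycle]) (by simp [twistCocycle])
    simpa only [twistedRep_gen] using hzg.map (twistedRep hq0)
  have hf1 : f = Finsupp.single 1 (f 1) :=
    eq_single_one_of_twistedLeftMul_eq_twistedRightMul (fun _ _ => zpow_ne_zero _ hq0) hf
  refine ⟨f 1, ?_⟩
  calc algebraMap ℂ (Cq q n) (f 1) = monomialCombination q (Finsupp.single 1 (f 1)) := by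
        simp [monomialCombination, Algebra.algebraMap_eq_smul_one]
    _ = z := by rw [← hf1, monomialCombination_twistedRep_single_one]

open CqXY in
/-- for `q` not a root of unity and `n ≥ 2`, the center of `ℂ_q[x,y]`
consists exactly of the scalar multiples of the identity. -/
theorem center_CqXY_trivial (n : ℕ) (hn : 2 ≤ n)
    (q : ℂ) (hq0 : q ≠ 0) (hq : ∀ k : ℕ, 0 < k → q ^ k ≠ 1) :
    Subalgebra.center ℂ (Cq q n) = ⊥ :=
  center_CqXY_trivial_general n q hq0
end
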